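/- arXiv:0901.1742 — 2 statements merged into one kernel-verified Lean document; each statement's English description precedes it below -/
import Mathlib

section
/- Let f : A → B be a homomorphism of commutative rings and J an ideal of B, and regard J as an A-module via the action a·j := f(a)j. If J is finitely generated as an A-module, then A⋈^f J is a Noetherian ring if and only if A is a Noetherian ring. -/
/-!
Projecting to the first coordinate is a surjective ring map `A ⋈^f J → A`, so `A` is Noetherian
when the amalgamation is. Conversely, through the diagonal `a ↦ (a, f a)` the amalgamation is an
`A`-algebra, and `(a, j) ↦ (a, f a + j)` is a surjective `A`-linear map `A × J → A ⋈^f J`; so if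
`J` is a finitely generated `A`-module the amalgamation is a finite algebra over `A`, hence
Noetherian when `A` is.
-/

/-- The amalgamation `A ⋈^f J = {(a, f a + j) | a ∈ A, j ∈ J}` of `A` with `B`
along the ideal `J` of `B`, with respect to the ring homomorphism `f : A → B`,
as a subring of the product ring `A × B`. -/
def amalgamation {A B : Type*} [CommRing A] [CommRing B] (f : A →+* B) (J : Ideal B) :
    Subring (A × B) where
  carrier := {x : A × B | ∃ a : A, ∃ j ∈ J, x = (a, f a + j)}
  one_mem' := ⟨1, 0, J.zero_mem, by simp; rfl⟩
  zero_mem' := ⟨0, 0, J.zero_mem, by simp; rfl⟩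
  mul_mem' := by
    rintro x y ⟨a, j, hj, rfl⟩ ⟨c, k, hk, rfl⟩
    refine ⟨a * c, f a * k + j * f c + j * k,
      J.add_mem (J.add_mem (J.mul_mem_left _ hk) (J.mul_mem_right _ hj)) (J.mul_mem_right _ hj),
      ?_⟩
    simp only [Prod.mk_mul_mk, map_mul, Prod.mk.injEq]
    exact ⟨trivial, by ring⟩
  add_mem' := by
    rintro x y ⟨a, j, hj, rfl⟩ ⟨c, k, hk, rfl⟩
    refine ⟨a + c, j + k, J.add_mem hj hk, ?_⟩
    simp only [Prod.mk_add_mk, map_add, Prod.mk.injEq]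
    exact ⟨trivial, by ring⟩
  neg_mem' := by
    rintro x ⟨a, j, hj, rfl⟩
    refine ⟨-a, -j, J.neg_mem hj, ?_⟩
    simp only [Prod.neg_mk, map_neg, Prod.mk.injEq]
    exact ⟨trivial, by ring⟩

namespace amalgamation

variable {A B : Type*} [CommRing A] [CommRing B]

section RingHom

variable (f : A →+* B) (J : Ideal B)

def fst : amalgamation f J →+* A :=
  (RingHom.fst A B).comp (amalgamation f J).subtype

def diag : A →+* amalgamation f J where
  toFun a := ⟨(a, f a), a, 0, J.zero_mem, by simp⟩
  map_one' := by ext <;> simp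
  map_mul' x y := by ext <;> simp
  map_zero' := by ext <;> simp
  map_add' x y := by ext <;> simp

theorem fst_comp_diag : (fst f J).comp (diag f J) = RingHom.id A := rfl

theorem fst_surjective : Function.Surjective (fst f J) :=
  Function.RightInverse.surjective (RingHom.congr_fun (fst_comp_diag f J))

end RingHom

section Algebra

variable (A) [Algebra A B] (J : Ideal B)

instance : Algebra A (amalgamation (algebraMap A B) J) := (diag (algebraMap A B) J).toAlgebra

def ofProd : (A × J.restrictScalars A) →ₗ[A] amalgamation (algebraMap A B) J where
  toFun p := ⟨(p.1, algebraMap A B p.1 + p.2), p.1, p.2, p.2.2, rfl⟩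
  map_add' p q := by ext <;> simp only [Prod.fst_add, Prod.snd_add, Subring.coe_add,
    Submodule.coe_add, Prod.mk_add_mk, map_add]; ring
  map_smul' a p := by
    ext
    · rfl
    · change algebraMap A B (a * p.1) + a • (p.2 : B) = algebraMap A B a * _
      rw [map_mul, Algebra.smul_def]
      ring

theorem ofProd_surjective : Function.Surjective (ofProd A J) := by
  rintro ⟨_, a, j, hj, rfl⟩
  exact ⟨(a, ⟨j, hj⟩), rfl⟩

theorem moduleFinite_of_fg (hJ : (J.restrictScalars A).FG) :
    Module.Finite A (amalgamation (algebraMap A B) J) :=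
  have : Module.Finite A (J.restrictScalars A) := Module.Finite.iff_fg.mpr hJ
  Module.Finite.of_surjective (ofProd A J) (ofProd_surjective A J)

theorem isNoetherianRing_iff (hJ : (J.restrictScalars A).FG) :
    IsNoetherianRing (amalgamation (algebraMap A B) J) ↔ IsNoetherianRing A := by
  refine ⟨fun _ => isNoetherianRing_of_surjective _ A _ (fst_surjective (algebraMap A B) J),
    fun _ => ?_⟩
  have := moduleFinite_of_fg A J hJ
  exact IsNoetherianRing.of_finite A _

end Algebra

end amalgamation

theorem statement8 {A B : Type*} [CommRing A] [CommRing B] (f : A →+* B) (J : Ideal B) :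
    letI : Algebra A B := f.toAlgebra
    (Submodule.restrictScalars A J).FG →
      (IsNoetherianRing ↥(amalgamation f J) ↔ IsNoetherianRing A) := by
  let : Algebra A B := f.toAlgebra
  exact amalgamation.isNoetherianRing_iff A J
end

section
/- Let f : A → B be a homomorphism of commutative rings and J an ideal of B. Suppose B is a Noetherian ring and the induced ring homomorphism f̆ : A → B/J (the composition of f with the canonical projection π : B → B/J) is finite, i.e., B/J is finitely generated as an A-module via f̆. Then A⋈^f J is a Noetherian ring if and only if A is a Noetherian ring. -/
open Submodule
open scoped Pointwise

section Formanek

variable {R M : Type*}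

theorem isNoetherian_of_forall_ne_bot_exists_fg_le [Ring R] [AddCommGroup M] [Module R M]
    (h : ∀ P : Submodule R M, P ≠ ⊥ → ∃ Q ≤ P, Q.FG ∧ IsNoetherian R (M ⧸ Q)) :
    IsNoetherian R M := by
  refine ⟨fun P => ?_⟩
  rcases eq_or_ne P ⊥ with rfl | hP
  · exact fg_bot
  obtain ⟨Q, hQP, hQ, _⟩ := h P hP
  refine fg_of_fg_map_of_fg_inf_ker Q.mkQ (IsNoetherian.noetherian _) ?_
  rwa [ker_mkQ, inf_eq_right.2 hQP]

variable [CommRing R] [AddCommGroup M] [Module R M]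

theorem isNoetherian_quotient_of_le_comap {M' : Type*} [AddCommGroup M'] [Module R M']
    {f : M →ₗ[R] M'} (hf : Function.Surjective f) {X : Submodule R M} {Y : Submodule R M'}
    (hXY : X ≤ Y.comap f) [IsNoetherian R (M ⧸ X)] : IsNoetherian R (M' ⧸ Y) :=
  isNoetherian_of_surjective (X.mapQ Y f hXY) <| by
    rw [range_mapQ, LinearMap.range_eq_top.2 hf, Submodule.map_top, range_mkQ]

theorem mem_annihilator_quotient_iff {N : Submodule R M} {r : R} :
    r ∈ Module.annihilator R (M ⧸ N) ↔ r • (⊤ : Submodule R M) ≤ N := by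
  rw [annihilator_quotient, ← top_coe (R := R), mem_colon_iff_le]

theorem fg_smul_top [Module.Finite R M] (r : R) : (r • (⊤ : Submodule R M)).FG := by
  rw [← ideal_span_singleton_smul]
  exact FG.smul (fg_span_singleton r) Module.Finite.fg_top

theorem isNoetherian_quotient_annihilator [Module.Finite R M] [IsNoetherian R M] :
    IsNoetherian R (R ⧸ Module.annihilator R M) := by
  obtain ⟨n, s, hs⟩ := Module.Finite.exists_fin (R := R) (M := M)
  let φ : R →ₗ[R] Fin n → M := LinearMap.pi fun i => LinearMap.toSpanSingleton R M (s i)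
  have hker : LinearMap.ker φ = Module.annihilator R M := by
    rw [LinearMap.ker_pi, ← annihilator_top, ← hs, annihilator_span]
    exact (iInf_range' (fun g => LinearMap.ker (LinearMap.toSpanSingleton R M g)) s).symm
  rw [← hker]
  exact isNoetherian_of_linearEquiv φ.quotKerEquivRange.symm

theorem isNoetherian_of_isNoetherian_quotient_annihilator [Module.Finite R M]
    [IsNoetherian R (R ⧸ Module.annihilator R M)] : IsNoetherian R M := by
  let := Module.quotientAnnihilator (R := R) (M := M)
  have : IsNoetherianRing (R ⧸ Module.annihilator R M) :=
    isNoetherianRing_iff.2 (isNoetherian_of_tower R inferInstance)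
  have : IsScalarTower R (R ⧸ Module.annihilator R M) M :=
    (Module.isTorsionBySet_annihilator R M).isScalarTower
  have : Module.Finite (R ⧸ Module.annihilator R M) M :=
    .of_restrictScalars_finite R _ M
  refine ⟨fun N => ?_⟩
  have hspan :=
    restrictScalars_span (M := M) R (R ⧸ Module.annihilator R M) Ideal.Quotient.mk_surjective
  obtain ⟨X, hX⟩ := IsNoetherian.noetherian (span (R ⧸ Module.annihilator R M) (N : Set M))
  exact ⟨X, by rw [← hspan, hX, hspan, span_eq]⟩

theorem exists_maximal_annihilator_quotient_le [Module.Finite R M] :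
    ∃ N : Submodule R M,
      Maximal (fun N => Module.annihilator R (M ⧸ N) ≤ Module.annihilator R M) N := by
  set s := {N : Submodule R M | Module.annihilator R (M ⧸ N) ≤ Module.annihilator R M}
  have hbot : ⊥ ∈ s := fun r hr => by
    rw [mem_annihilator_quotient_iff] at hr
    exact Module.mem_annihilator.2 fun m =>
      (mem_bot R).1 (hr (smul_mem_pointwise_smul m r ⊤ mem_top))
  have hchain : ∀ c ⊆ s, IsChain (· ≤ ·) c → ∀ N ∈ c, ∃ ub ∈ s, ∀ N' ∈ c, N' ≤ ub := by
    intro c hc hchain N hN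
    refine ⟨sSup c, fun r hr => ?_, fun _ => le_sSup⟩
    rw [mem_annihilator_quotient_iff] at hr
    obtain ⟨N', hN', hrN'⟩ := (CompleteLattice.isCompactElement_iff_le_of_directed_sSup_le _ _).1
      ((fg_iff_compact _).1 (fg_smul_top r)) c ⟨N, hN⟩ hchain.directedOn hr
    exact hc hN' (mem_annihilator_quotient_iff.2 hrN')
  obtain ⟨N, -, hN⟩ := zorn_le_nonempty₀ s hchain ⊥ hbot
  exact ⟨N, hN⟩

theorem isNoetherian_of_forall_isNoetherian_quotient_smul_top [Module.Finite R M]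
    (h : ∀ r ∉ Module.annihilator R M, IsNoetherian R (M ⧸ r • (⊤ : Submodule R M))) :
    IsNoetherian R M := by
  obtain ⟨N, hN⟩ := exists_maximal_annihilator_quotient_le (R := R) (M := M)
  have : IsNoetherian R (M ⧸ N) := by
    refine isNoetherian_of_forall_ne_bot_exists_fg_le fun P hP => ?_
    have hlt : N < P.comap N.mkQ := by
      refine lt_of_le_of_ne (by simpa using LinearMap.ker_le_comap N.mkQ) fun hNP => hP ?_
      rw [← map_comap_eq_of_surjective N.mkQ_surjective P, ← hNP, mkQ_map_self]
    obtain ⟨r, hrP, hr⟩ := Set.not_subset.1 (hN.not_prop_of_gt hlt)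
    rw [SetLike.mem_coe, mem_annihilator_quotient_iff] at hrP
    have := h r hr
    refine ⟨(r • ⊤ : Submodule R M).map N.mkQ, map_le_iff_le_comap.2 hrP,
      (fg_smul_top r).map _, ?_⟩
    exact isNoetherian_quotient_of_le_comap N.mkQ_surjective (le_comap_map _ _)
  have := isNoetherian_quotient_annihilator (R := R) (M := M ⧸ N)
  have : IsNoetherian R (R ⧸ Module.annihilator R M) :=
    isNoetherian_quotient_of_le_comap (f := LinearMap.id) Function.surjective_id hN.prop
  exact isNoetherian_of_isNoetherian_quotient_annihilator

theorem isNoetherian_of_isNoetherian_of_isScalarTower (S : Type*) [CommRing S] [Algebra R S]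
    [Module S M] [IsScalarTower R S M] [IsNoetherian S M] [Module.Finite R M] :
    IsNoetherian R M := by
  by_contra hM
  -- `I • M` is the `S`-submodule `g I` viewed over `R`, so these submodules satisfy ACC.
  let g (I : Ideal R) : Submodule S M := I.map (algebraMap R S) • ⊤
  have hg (I : Ideal R) : (g I).restrictScalars R = I • ⊤ := by
    rw [Ideal.smul_restrictScalars, restrictScalars_top]
  obtain ⟨I₀, hI₀, hmax⟩ := (InvImage.wf g wellFounded_gt).has_min
    {I | ¬ IsNoetherian R (M ⧸ I • (⊤ : Submodule R M))} ⟨⊥, by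
      rw [Set.mem_ofPred_eq, bot_smul]
      exact fun h => hM (isNoetherian_of_linearEquiv (quotEquivOfEqBot ⊥ rfl))⟩
  refine hI₀ (isNoetherian_of_forall_isNoetherian_quotient_smul_top fun r hr => ?_)
  let I := I₀ ⊔ Ideal.span {r}
  have hI : I • (⊤ : Submodule R M) = I₀ • ⊤ ⊔ r • ⊤ := by
    rw [sup_smul, ideal_span_singleton_smul]
  have hlt : g I₀ < g I := by
    rw [← (restrictScalarsEmbedding R S M).lt_iff_lt]
    change (g I₀).restrictScalars R < (g I).restrictScalars R
    rw [hg, hg, hI]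
    exact left_lt_sup.2 fun hle => hr (mem_annihilator_quotient_iff.2 hle)
  have : IsNoetherian R (M ⧸ I • (⊤ : Submodule R M)) := by
    by_contra hnot
    exact hmax I hnot hlt
  refine isNoetherian_quotient_of_le_comap (X := I • ⊤) (mkQ_surjective _) ?_
  rw [hI]
  refine sup_le ((ker_mkQ _).symm.le.trans (LinearMap.ker_le_comap _)) (map_le_iff_le_comap.1 ?_)
  rw [map_pointwise_smul, Submodule.map_top, range_mkQ]

end Formanek

theorem isNoetherianRing_of_injective_of_finite {R S : Type*} [CommRing R] [CommRing S]
    [Algebra R S] [Module.Finite R S] [IsNoetherianRing S]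
    (h : Function.Injective (algebraMap R S)) : IsNoetherianRing R :=
  have : IsNoetherian R S := isNoetherian_of_isNoetherian_of_isScalarTower S
  isNoetherian_of_injective (Algebra.linearMap R S) h

section Amalgamation

variable {A B : Type*} [CommRing A] [CommRing B] {f : A →+* B} {J : Ideal B}

theorem mem_amalgamation_iff {x : A × B} : x ∈ amalgamation f J ↔ x.2 - f x.1 ∈ J := by
  refine ⟨?_, fun h => ⟨x.1, x.2 - f x.1, h, by simp⟩⟩
  rintro ⟨a, j, hj, rfl⟩
  simpa using hj

theorem amalgamation_moduleFinite (hf : ((Ideal.Quotient.mk J).comp f).Finite) :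
    Module.Finite (amalgamation f J) (A × B) := by
  let := ((Ideal.Quotient.mk J).comp f).toAlgebra
  have : Module.Finite A (B ⧸ J) := hf
  obtain ⟨n, s, hs⟩ := Module.Finite.exists_fin (R := A) (M := B ⧸ J)
  choose b hb using fun i => Ideal.Quotient.mk_surjective (s i)
  have hdiag (a : A) : ((a, f a) : A × B) ∈ amalgamation f J := by
    simp [mem_amalgamation_iff]
  have hJ {j : B} (hj : j ∈ J) : ((0, j) : A × B) ∈ amalgamation f J := by
    simpa [mem_amalgamation_iff] using hj
  let gens : Set (A × B) := {(1, 0), (0, 1)} ∪ Set.range fun i => (0, b i)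
  let N := span (amalgamation f J) gens
  have hfst (a : A) : ((a, 0) : A × B) ∈ N := by
    have := N.smul_mem ⟨_, hdiag a⟩ (subset_span (Or.inl (Or.inl rfl)))
    simpa [Subring.smul_def] using this
  have hsnd (y : B) : ((0, y) : A × B) ∈ N := by
    have hy : Ideal.Quotient.mk J y ∈ span A (Set.range s) := hs ▸ mem_top
    obtain ⟨c, hc⟩ := (mem_span_range_iff_exists_fun A).1 hy
    have hj : y - ∑ i, f (c i) * b i ∈ J := by
      rw [← Ideal.Quotient.eq_zero_iff_mem, map_sub, ← hc, map_sum]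
      simp [Algebra.smul_def, RingHom.algebraMap_toAlgebra, hb]
    have := N.add_mem
      (N.sum_mem (t := Finset.univ) fun i _ =>
        N.smul_mem ⟨_, hdiag (c i)⟩ (subset_span (Or.inr ⟨i, rfl⟩)))
      (N.smul_mem ⟨_, hJ hj⟩ (subset_span (Or.inl (Or.inr rfl))))
    convert this using 1
    ext <;> simp [Subring.smul_def, Prod.fst_sum, Prod.snd_sum]
  refine ⟨fg_def.2 ⟨gens, Set.toFinite gens, eq_top_iff.2 ?_⟩⟩
  rintro ⟨a, y⟩ -
  simpa using N.add_mem (hfst a) (hsnd y)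

end Amalgamation

theorem statement10 {A B : Type*} [CommRing A] [CommRing B] (f : A →+* B) (J : Ideal B)
    (hB : IsNoetherianRing B) (hf : ((Ideal.Quotient.mk J).comp f).Finite) :
    IsNoetherianRing ↥(amalgamation f J) ↔ IsNoetherianRing A := by
  refine ⟨fun _ => ?_, fun _ => ?_⟩
  · refine isNoetherianRing_of_surjective _ A
      ((RingHom.fst A B).comp (amalgamation f J).subtype) fun a => ?_
    exact ⟨⟨(a, f a), mem_amalgamation_iff.2 (by simp)⟩, rfl⟩
  · have := amalgamation_moduleFinite hf
    exact isNoetherianRing_of_injective_of_finite (S := A × B) Subtype.val_injective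
end
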